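/- arXiv:2504.14385 — 10 statements merged into one kernel-verified Lean document; each statement's English description precedes it below -/
import Mathlib

section
/- Let F ⊂ Y be a subset of a Banach space Y, y ∈ F and u ∈ Y, and let d(x) = dist(x, F). If F is not porous at y in the direction of u and not porous at y in the direction of −u, then d is Hadamard differentiable at y in the direction of u with derivative 0. -/
open Filter Metric Set

/-- `F` is porous at `y` in the direction `u`: there are `c > 0` and positive
`tₙ → 0` with `B(y + tₙ u, c tₙ) ∩ F = ∅` for all `n`. -/
def PorousAt {Y : Type*} [NormedAddCommGroup Y] [NormedSpace ℝ Y]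
    (F : Set Y) (y u : Y) : Prop :=
  ∃ c > (0 : ℝ), ∃ t : ℕ → ℝ, (∀ n, 0 < t n) ∧
    Filter.Tendsto t Filter.atTop (nhds 0) ∧
    ∀ n, Metric.ball (y + t n • u) (c * t n) ∩ F = ∅

/-- `z` is a Hadamard derivative of `f` (with domain `F`) at `y` in the direction `u`:
for all sequences `tₙ → 0`, `tₙ ≠ 0`, `uₙ → u` with `y + tₙ • uₙ ∈ F`, the
difference quotients converge to `z`. -/
def HadamardDerivAt {Y Z : Type*} [NormedAddCommGroup Y] [NormedSpace ℝ Y]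
    [NormedAddCommGroup Z] [NormedSpace ℝ Z]
    (f : Y → Z) (F : Set Y) (y u : Y) (z : Z) : Prop :=
  ∀ (t : ℕ → ℝ) (v : ℕ → Y), (∀ n, t n ≠ 0) →
    Filter.Tendsto t Filter.atTop (nhds 0) →
    Filter.Tendsto v Filter.atTop (nhds u) →
    (∀ n, y + t n • v n ∈ F) →
    Filter.Tendsto (fun n => (t n)⁻¹ • (f (y + t n • v n) - f y))
      Filter.atTop (nhds z)

/-!
Since `infDist · F` is 1-Lipschitz, `infDist (y + t • v) F ≤ infDist (y + t • u) F + |t| ‖v - u‖`,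
so it suffices to show `infDist (y + s • u) F = o(|s|)` as `s → 0`, `s ≠ 0`. A ball
`B(y + s • u, c s)` misses `F` exactly when `c s ≤ infDist (y + s • u) F`, so non-porosity in the
direction `u` gives this for `s → 0⁺`, and non-porosity in the direction `-u` for `s → 0⁻`.
-/

open scoped Topology

section

variable {Y : Type*} [NormedAddCommGroup Y] [NormedSpace ℝ Y] {F : Set Y} {y u : Y}

theorem porousAt_of_frequently_le_infDist {c : ℝ} (hc : 0 < c)
    (h : ∃ᶠ s in 𝓝[>] (0 : ℝ), c * s ≤ infDist (y + s • u) F) : PorousAt F y u := by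
  obtain ⟨t, ht_tendsto, ht⟩ :=
    frequently_iff_seq_forall.mp (h.and_eventually (self_mem_nhdsWithin (s := Set.Ioi 0)))
  refine ⟨c, hc, t, fun n => (ht n).2, tendsto_nhds_of_tendsto_nhdsWithin ht_tendsto,
    fun n => ?_⟩
  rw [← Set.disjoint_iff_inter_eq_empty]
  exact (disjoint_ball_infDist (x := y + t n • u)).mono_left (ball_subset_ball (ht n).1)

theorem tendsto_infDist_div_nhdsGT_of_not_porousAt (h : ¬PorousAt F y u) :
    Tendsto (fun s : ℝ => infDist (y + s • u) F / s) (𝓝[>] 0) (𝓝 0) := by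
  refine Metric.tendsto_nhds.mpr fun ε hε => ?_
  by_contra hfar
  refine h (porousAt_of_frequently_le_infDist hε ?_)
  refine ((not_eventually.mp hfar).and_eventually self_mem_nhdsWithin).mono ?_
  rintro s ⟨hs_far, hs_pos : 0 < s⟩
  rwa [Real.dist_0_eq_abs, abs_of_nonneg (div_nonneg infDist_nonneg hs_pos.le), not_lt,
    le_div_iff₀ hs_pos] at hs_far

theorem tendsto_infDist_div_abs_nhdsNE_of_not_porousAt (hu : ¬PorousAt F y u)
    (hnu : ¬PorousAt F y (-u)) :
    Tendsto (fun s : ℝ => infDist (y + s • u) F / |s|) (𝓝[≠] 0) (𝓝 0) := by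
  rw [← nhdsLT_sup_nhdsGT, tendsto_sup]
  constructor
  · have hneg : Tendsto Neg.neg (𝓝[<] (0 : ℝ)) (𝓝[>] 0) := by
      simpa using tendsto_neg_nhdsLT (a := (0 : ℝ))
    refine ((tendsto_infDist_div_nhdsGT_of_not_porousAt hnu).comp hneg).congr' ?_
    filter_upwards [self_mem_nhdsWithin] with s (hs : s < 0)
    simp [abs_of_neg hs]
  · refine (tendsto_infDist_div_nhdsGT_of_not_porousAt hu).congr' ?_
    filter_upwards [self_mem_nhdsWithin] with s (hs : 0 < s)
    rw [abs_of_pos hs]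

theorem infDist_smul_div_abs_le (t : ℝ) (v : Y) :
    infDist (y + t • v) F / |t| ≤ infDist (y + t • u) F / |t| + ‖v - u‖ := by
  rcases eq_or_ne t 0 with rfl | ht
  · simp
  rw [div_le_iff₀ (abs_pos.mpr ht), add_mul, div_mul_cancel₀ _ (abs_ne_zero.mpr ht)]
  calc infDist (y + t • v) F ≤ infDist (y + t • u) F + dist (y + t • v) (y + t • u) :=
        infDist_le_infDist_add_dist
    _ = infDist (y + t • u) F + ‖v - u‖ * |t| := by
        rw [dist_add_left, dist_eq_norm, ← smul_sub, norm_smul, Real.norm_eq_abs, mul_comm]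

end

theorem stmt_4_general {Y : Type*} [NormedAddCommGroup Y] [NormedSpace ℝ Y]
    (F : Set Y) (y u : Y) (hy : y ∈ F)
    (h1 : ¬ PorousAt F y u) (h2 : ¬ PorousAt F y (-u)) :
    HadamardDerivAt (fun x => Metric.infDist x F) Set.univ y u (0 : ℝ) := by
  intro t v ht ht_tendsto hv_tendsto _
  have ht_ne : Tendsto t atTop (𝓝[≠] 0) :=
    tendsto_nhdsWithin_of_tendsto_nhds_of_eventually_within _ ht_tendsto (.of_forall ht)
  have hbound : Tendsto (fun n => infDist (y + t n • u) F / |t n| + ‖v n - u‖) atTop (𝓝 0) := by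
    simpa using ((tendsto_infDist_div_abs_nhdsNE_of_not_porousAt h1 h2).comp ht_ne).add
      (tendsto_iff_norm_sub_tendsto_zero.mp hv_tendsto)
  refine squeeze_zero_norm (fun n => ?_) hbound
  simp only [infDist_zero_of_mem hy, sub_zero]
  rw [norm_smul, norm_inv, Real.norm_eq_abs, Real.norm_eq_abs,
    abs_of_nonneg infDist_nonneg, inv_mul_eq_div]
  exact infDist_smul_div_abs_le (t n) (v n)

theorem stmt_4 {Y : Type*} [NormedAddCommGroup Y] [NormedSpace ℝ Y] [CompleteSpace Y]
    (F : Set Y) (y u : Y) (hy : y ∈ F)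
    (h1 : ¬ PorousAt F y u) (h2 : ¬ PorousAt F y (-u)) :
    HadamardDerivAt (fun x => Metric.infDist x F) Set.univ y u (0 : ℝ) :=
  stmt_4_general F y u hy h1 h2
end

section
/- Let F ⊂ Y. If F is porous at y ∈ F in the direction of u ∈ Y, then the distance function d(x) = dist(x, F) is not Hadamard differentiable at y in the direction of u. -/
open Filter Metric Set

theorem stmt_5 {Y : Type*} [NormedAddCommGroup Y] [NormedSpace ℝ Y] [CompleteSpace Y]
    (F : Set Y) (y u : Y) (hy : y ∈ F) (hpor : PorousAt F y u) :
    ¬ ∃ z : ℝ, HadamardDerivAt (fun x => Metric.infDist x F) Set.univ y u z := by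
  rintro ⟨z, hz⟩
  obtain ⟨c, hc, t, ht, htlim, hball⟩ := hpor
  have hFn : F.Nonempty := ⟨y, hy⟩
  have hd0 : Metric.infDist y F = 0 := Metric.infDist_zero_of_mem hy
  -- z ≥ c from porosity sequence
  have h1 := hz t (fun _ => u) (fun n => (ht n).ne') htlim tendsto_const_nhds
    (fun n => Set.mem_univ _)
  have hzc : c ≤ z := by
    refine ge_of_tendsto h1 (Eventually.of_forall fun n => ?_)
    have hle : c * t n ≤ Metric.infDist (y + t n • u) F := by
      by_contra hlt
      push_neg at hlt
      obtain ⟨w, hw, hdw⟩ := (Metric.infDist_lt_iff hFn).1 hlt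
      have hmem : w ∈ Metric.ball (y + t n • u) (c * t n) ∩ F :=
        ⟨by rwa [Metric.mem_ball, dist_comm], hw⟩
      rw [hball n] at hmem
      exact hmem
    show c ≤ (t n)⁻¹ * (Metric.infDist (y + t n • u) F - Metric.infDist y F)
    rw [hd0, sub_zero, inv_mul_eq_div, le_div_iff₀ (ht n)]
    linarith
  -- z ≤ 0 from negative times
  have h2 := hz (fun n => -(t n)) (fun _ => u) (fun n => by simpa using (ht n).ne')
    (by simpa using htlim.neg) tendsto_const_nhds (fun n => Set.mem_univ _)
  have hz0 : z ≤ 0 := by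
    refine le_of_tendsto h2 (Eventually.of_forall fun n => ?_)
    have hnn : 0 ≤ Metric.infDist (y + -(t n) • u) F := Metric.infDist_nonneg
    have hinv : (-(t n))⁻¹ ≤ 0 := by
      rw [inv_nonpos]
      linarith [ht n]
    show (-(t n))⁻¹ * (Metric.infDist (y + -(t n) • u) F - Metric.infDist y F) ≤ 0
    rw [hd0, sub_zero]
    exact mul_nonpos_of_nonpos_of_nonneg hinv hnn
  linarith
end

section
/- Let Y, Z be Banach spaces, F ⊂ Y, and f : F → Z be K-Lipschitz with K > 0. Let v ∈ Y, 0 < δ₁ < δ₂, ω > 0. Then the two-sided Hadamard derived set satisfies D̂[δ₂, ω] f(y, v) ⊂ D̂[δ₁, ω] f(y, v) + B(0, 2K(‖v‖ + ω)(1 − δ₁/δ₂)) when F = Y. -/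
open Filter Metric Set Pointwise

/-- Two-sided Hadamard derived set
`D̂[δ,ω] f(y,v) = {(f(y+tû) − f(y))/t : 0 < |t| < δ, û ∈ B(v,ω)}`
for `f` defined on the whole space. -/
def DSetBoth {Y Z : Type*} [NormedAddCommGroup Y] [NormedSpace ℝ Y]
    [NormedAddCommGroup Z] [NormedSpace ℝ Z]
    (f : Y → Z) (y v : Y) (δ ω : ℝ) : Set Z :=
  {z | ∃ t : ℝ, t ≠ 0 ∧ |t| < δ ∧
    ∃ u ∈ Metric.closedBall v ω, z = t⁻¹ • (f (y + t • u) - f y)}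

/-! Shrinking the step `t` of a difference quotient to `λ t`, `λ = δ₁ / δ₂`, keeps the direction
`u` and moves the quotient by at most `2K(1 - λ)‖u‖`: one `K(1 - λ)‖u‖` for the change of the
numerator, one for the change of the factor `1/t`. -/

section LipschitzSlope

variable {Y Z : Type*} [NormedAddCommGroup Y] [NormedSpace ℝ Y]
  [NormedAddCommGroup Z] {f : Y → Z} {K : ℝ}

lemma norm_sub_le_of_lipschitz_along_line (hf : ∀ a b : Y, ‖f a - f b‖ ≤ K * ‖a - b‖)
    (y u : Y) (t s : ℝ) :
    ‖f (y + t • u) - f (y + s • u)‖ ≤ K * (|t - s| * ‖u‖) := by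
  have hsub : (y + t • u) - (y + s • u) = (t - s) • u := by module
  simpa only [hsub, norm_smul, Real.norm_eq_abs] using hf (y + t • u) (y + s • u)

lemma norm_slope_sub_slope_le [NormedSpace ℝ Z] (hf : ∀ a b : Y, ‖f a - f b‖ ≤ K * ‖a - b‖)
    (y u : Y) {t s : ℝ} (ht : t ≠ 0) (hs : s ≠ 0) :
    ‖t⁻¹ • (f (y + t • u) - f y) - s⁻¹ • (f (y + s • u) - f y)‖ ≤
      2 * K * |t - s| * ‖u‖ / |t| := by
  set A := f (y + t • u) - f y
  set B := f (y + s • u) - f y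
  have hdecomp : t⁻¹ • A - s⁻¹ • B = t⁻¹ • (A - B) + (t⁻¹ - s⁻¹) • B := by module
  have hAB : A - B = f (y + t • u) - f (y + s • u) := by simp only [A, B]; abel
  have hB : ‖B‖ ≤ K * (|s| * ‖u‖) := by
    simpa only [zero_smul, add_zero, sub_zero] using
      norm_sub_le_of_lipschitz_along_line hf y u s 0
  have hcoeff : |t⁻¹ - s⁻¹| * |s| = |t - s| / |t| := by
    rw [inv_sub_inv ht hs, abs_div, abs_mul, abs_sub_comm s t]
    field_simp [abs_ne_zero.2 hs]
  have hterm₁ : ‖t⁻¹ • (A - B)‖ ≤ K * |t - s| * ‖u‖ / |t| := by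
    rw [norm_smul, norm_inv, Real.norm_eq_abs, hAB, inv_mul_eq_div, mul_assoc]
    gcongr
    exact norm_sub_le_of_lipschitz_along_line hf y u t s
  have hterm₂ : ‖(t⁻¹ - s⁻¹) • B‖ ≤ K * |t - s| * ‖u‖ / |t| :=
    calc ‖(t⁻¹ - s⁻¹) • B‖ = |t⁻¹ - s⁻¹| * ‖B‖ := by rw [norm_smul, Real.norm_eq_abs]
      _ ≤ |t⁻¹ - s⁻¹| * (K * (|s| * ‖u‖)) := by gcongr
      _ = K * (|t⁻¹ - s⁻¹| * |s|) * ‖u‖ := by ring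
      _ = K * |t - s| * ‖u‖ / |t| := by rw [hcoeff]; ring
  calc ‖t⁻¹ • A - s⁻¹ • B‖ ≤ ‖t⁻¹ • (A - B)‖ + ‖(t⁻¹ - s⁻¹) • B‖ := by
        rw [hdecomp]; exact norm_add_le _ _
    _ ≤ K * |t - s| * ‖u‖ / |t| + K * |t - s| * ‖u‖ / |t| := add_le_add hterm₁ hterm₂
    _ = 2 * K * |t - s| * ‖u‖ / |t| := by ring

end LipschitzSlope

theorem stmt_8_general {Y Z : Type*} [NormedAddCommGroup Y] [NormedSpace ℝ Y]
    [NormedAddCommGroup Z] [NormedSpace ℝ Z]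
    (f : Y → Z) (K : ℝ) (hK : 0 < K)
    (hf : ∀ a b : Y, ‖f a - f b‖ ≤ K * ‖a - b‖)
    (y v : Y) (δ₁ δ₂ ω : ℝ) (h1 : 0 < δ₁) (h12 : δ₁ < δ₂) :
    DSetBoth f y v δ₂ ω ⊆
      DSetBoth f y v δ₁ ω +
        Metric.closedBall (0 : Z) (2 * K * (‖v‖ + ω) * (1 - δ₁ / δ₂)) := by
  rintro _ ⟨t, ht0, htδ, u, hu, rfl⟩
  have hδ₂ : 0 < δ₂ := h1.trans h12
  set l := δ₁ / δ₂
  have hl0 : 0 < l := div_pos h1 hδ₂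
  have hl1 : l < 1 := (div_lt_one hδ₂).2 h12
  have hlt : l * t ≠ 0 := mul_ne_zero hl0.ne' ht0
  have hltδ : |l * t| < δ₁ := by
    rw [abs_mul, abs_of_pos hl0, ← div_mul_cancel₀ δ₁ hδ₂.ne']
    exact mul_lt_mul_of_pos_left htδ hl0
  have hscale : |t - l * t| / |t| = 1 - l := by
    rw [← one_sub_mul, abs_mul, mul_div_cancel_right₀ _ (abs_ne_zero.2 ht0),
      abs_of_pos (sub_pos.2 hl1)]
  refine Set.mem_add.2 ⟨_, ⟨l * t, hlt, hltδ, u, hu, rfl⟩, _,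
    mem_closedBall_zero_iff.2 ?_, add_sub_cancel _ _⟩
  calc _ ≤ 2 * K * |t - l * t| * ‖u‖ / |t| := norm_slope_sub_slope_le hf y u ht0 hlt
    _ = 2 * K * ‖u‖ * (1 - l) := by rw [← hscale]; ring
    _ ≤ 2 * K * (‖v‖ + ω) * (1 - l) := by
      gcongr
      exact norm_le_of_mem_closedBall hu

theorem stmt_8 {Y Z : Type*} [NormedAddCommGroup Y] [NormedSpace ℝ Y] [CompleteSpace Y]
    [NormedAddCommGroup Z] [NormedSpace ℝ Z] [CompleteSpace Z]
    (f : Y → Z) (K : ℝ) (hK : 0 < K)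
    (hf : ∀ a b : Y, ‖f a - f b‖ ≤ K * ‖a - b‖)
    (y v : Y) (δ₁ δ₂ ω : ℝ) (h1 : 0 < δ₁) (h12 : δ₁ < δ₂) (hω : 0 < ω) :
    DSetBoth f y v δ₂ ω ⊆
      DSetBoth f y v δ₁ ω +
        Metric.closedBall (0 : Z) (2 * K * (‖v‖ + ω) * (1 - δ₁ / δ₂)) :=
  stmt_8_general f K hK hf y v δ₁ δ₂ ω h1 h12
end

section
/- Let Y, Z be Banach spaces, F ⊂ Y, f : F → Z a K-Lipschitz function with K > 0. Let u₁, u₂ ∈ Y, y ∈ F be such that the Hadamard derivatives zᵢ = f'(y; uᵢ) exist for i = 1, 2 and F is not porous at y in the direction of each uᵢ. Then ‖z₁ − z₂‖ ≤ K‖u₁ − u₂‖. -/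
open Filter Metric Set

/-- Hadamard directional derivative (ε–δ form): for every `ε > 0` there are
`δ, ω > 0` such that `‖(f(y + t û) − f(y))/t − z‖ < ε` for all `0 < |t| < δ`
and `û ∈ B(u, ω)` with `y + t û ∈ F`. -/
def HadamardDerivED {Y Z : Type*} [NormedAddCommGroup Y] [NormedSpace ℝ Y]
    [NormedAddCommGroup Z] [NormedSpace ℝ Z]
    (f : Y → Z) (F : Set Y) (y u : Y) (z : Z) : Prop :=
  ∀ ε > (0 : ℝ), ∃ δ > (0 : ℝ), ∃ ω > (0 : ℝ), ∀ t : ℝ, t ≠ 0 → |t| < δ →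
    ∀ v ∈ Metric.ball u ω, y + t • v ∈ F →
      ‖(t⁻¹ • (f (y + t • v) - f y)) - z‖ < ε

lemma not_porousAt_imp {Y : Type*} [NormedAddCommGroup Y] [NormedSpace ℝ Y]
    {F : Set Y} {y u : Y} (h : ¬ PorousAt F y u) :
    ∀ c > (0:ℝ), ∃ δ > (0:ℝ), ∀ t : ℝ, 0 < t → t < δ →
      (Metric.ball (y + t • u) (c * t) ∩ F).Nonempty := by
  intro c hc
  by_contra hcon
  push_neg at hcon
  apply h
  refine ⟨c, hc, ?_⟩
  have hex : ∀ n : ℕ, ∃ t : ℝ, 0 < t ∧ t < 1/((n:ℝ)+1) ∧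
      Metric.ball (y + t • u) (c * t) ∩ F = ∅ := by
    intro n
    obtain ⟨t, ht0, htlt, hne⟩ := hcon (1/((n:ℝ)+1)) (by positivity)
    exact ⟨t, ht0, htlt, hne⟩
  choose t ht0 htlt hball using hex
  refine ⟨t, ht0, ?_, hball⟩
  have h1 : Tendsto (fun n : ℕ => 1/((n:ℝ)+1)) atTop (nhds 0) :=
    tendsto_one_div_add_atTop_nhds_zero_nat
  exact squeeze_zero (fun n => (ht0 n).le) (fun n => (htlt n).le) h1

theorem stmt_9 {Y Z : Type*} [NormedAddCommGroup Y] [NormedSpace ℝ Y] [CompleteSpace Y]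
    [NormedAddCommGroup Z] [NormedSpace ℝ Z] [CompleteSpace Z]
    (F : Set Y) (f : Y → Z) (K : ℝ) (hK : 0 < K)
    (hf : ∀ a ∈ F, ∀ b ∈ F, ‖f a - f b‖ ≤ K * ‖a - b‖)
    (y : Y) (hy : y ∈ F) (u₁ u₂ : Y) (z₁ z₂ : Z)
    (h₁ : HadamardDerivED f F y u₁ z₁) (h₂ : HadamardDerivED f F y u₂ z₂)
    (hp₁ : ¬ PorousAt F y u₁) (hp₂ : ¬ PorousAt F y u₂) :
    ‖z₁ - z₂‖ ≤ K * ‖u₁ - u₂‖ := by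
  refine le_of_forall_pos_le_add ?_
  intro ε hε
  have hε₀ : (0:ℝ) < ε/4 := by positivity
  obtain ⟨δ₁, hδ₁, ω₁, hω₁, H₁⟩ := h₁ (ε/4) hε₀
  obtain ⟨δ₂, hδ₂, ω₂, hω₂, H₂⟩ := h₂ (ε/4) hε₀
  set c := min (min ω₁ ω₂) (ε/(4*K)) with hcdef
  have hc : 0 < c := by
    refine lt_min (lt_min hω₁ hω₂) (by positivity)
  have hcω₁ : c ≤ ω₁ := le_trans (min_le_left _ _) (min_le_left _ _)
  have hcω₂ : c ≤ ω₂ := le_trans (min_le_left _ _) (min_le_right _ _)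
  have hcε : c ≤ ε/(4*K) := min_le_right _ _
  obtain ⟨δ₁', hδ₁', P₁⟩ := not_porousAt_imp hp₁ c hc
  obtain ⟨δ₂', hδ₂', P₂⟩ := not_porousAt_imp hp₂ c hc
  set m := min (min δ₁ δ₂) (min δ₁' δ₂') with hmdef
  have hm : 0 < m := lt_min (lt_min hδ₁ hδ₂) (lt_min hδ₁' hδ₂')
  set t := m / 2 with htdef
  have ht : 0 < t := by positivity
  have htm : t < m := half_lt_self hm
  have ht1 : t < δ₁ := htm.trans_le (le_trans (min_le_left _ _) (min_le_left _ _))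
  have ht2 : t < δ₂ := htm.trans_le (le_trans (min_le_left _ _) (min_le_right _ _))
  have ht1' : t < δ₁' := htm.trans_le (le_trans (min_le_right _ _) (min_le_left _ _))
  have ht2' : t < δ₂' := htm.trans_le (le_trans (min_le_right _ _) (min_le_right _ _))
  obtain ⟨p₁, hp1b, hp1F⟩ := P₁ t ht ht1'
  obtain ⟨p₂, hp2b, hp2F⟩ := P₂ t ht ht2'
  have hd1 : ‖p₁ - (y + t • u₁)‖ < c * t := by
    rw [← dist_eq_norm]; exact mem_ball.mp hp1b
  have hd2 : ‖p₂ - (y + t • u₂)‖ < c * t := by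
    rw [← dist_eq_norm]; exact mem_ball.mp hp2b
  set v₁ := t⁻¹ • (p₁ - y) with hv₁def
  set v₂ := t⁻¹ • (p₂ - y) with hv₂def
  have hyv₁ : y + t • v₁ = p₁ := by
    rw [hv₁def, smul_inv_smul₀ ht.ne']; abel
  have hyv₂ : y + t • v₂ = p₂ := by
    rw [hv₂def, smul_inv_smul₀ ht.ne']; abel
  have hvnorm : ∀ (p : Y) (u : Y), ‖p - (y + t • u)‖ < c * t →
      ‖t⁻¹ • (p - y) - u‖ < c := by
    intro p u hpu
    have heq : t⁻¹ • (p - y) - u = t⁻¹ • (p - (y + t • u)) := by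
      simp only [smul_sub, smul_add, inv_smul_smul₀ ht.ne']
      abel
    rw [heq, norm_smul, norm_inv, Real.norm_eq_abs, abs_of_pos ht]
    calc t⁻¹ * ‖p - (y + t • u)‖ < t⁻¹ * (c * t) := by
          exact mul_lt_mul_of_pos_left hpu (by positivity)
      _ = c := by field_simp
  have hv₁u : v₁ ∈ Metric.ball u₁ ω₁ := by
    rw [mem_ball, dist_eq_norm]
    exact lt_of_lt_of_le (hvnorm p₁ u₁ hd1) hcω₁
  have hv₂u : v₂ ∈ Metric.ball u₂ ω₂ := by
    rw [mem_ball, dist_eq_norm]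
    exact lt_of_lt_of_le (hvnorm p₂ u₂ hd2) hcω₂
  have habs : |t| < δ₁ := by rwa [abs_of_pos ht]
  have habs2 : |t| < δ₂ := by rwa [abs_of_pos ht]
  have E₁ : ‖t⁻¹ • (f p₁ - f y) - z₁‖ < ε/4 := by
    have := H₁ t ht.ne' habs v₁ hv₁u (hyv₁ ▸ hp1F)
    rwa [hyv₁] at this
  have E₂ : ‖t⁻¹ • (f p₂ - f y) - z₂‖ < ε/4 := by
    have := H₂ t ht.ne' habs2 v₂ hv₂u (hyv₂ ▸ hp2F)
    rwa [hyv₂] at this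
  have hpp : ‖p₁ - p₂‖ ≤ c * t + t * ‖u₁ - u₂‖ + c * t := by
    have : p₁ - p₂ = (p₁ - (y + t • u₁)) + t • (u₁ - u₂) + ((y + t • u₂) - p₂) := by
      rw [smul_sub]; abel
    rw [this]
    calc ‖(p₁ - (y + t • u₁)) + t • (u₁ - u₂) + ((y + t • u₂) - p₂)‖
        ≤ ‖(p₁ - (y + t • u₁)) + t • (u₁ - u₂)‖ + ‖(y + t • u₂) - p₂‖ := norm_add_le _ _
      _ ≤ ‖p₁ - (y + t • u₁)‖ + ‖t • (u₁ - u₂)‖ + ‖(y + t • u₂) - p₂‖ := by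
          gcongr; exact norm_add_le _ _
      _ ≤ c * t + t * ‖u₁ - u₂‖ + c * t := by
          rw [norm_smul, Real.norm_eq_abs, abs_of_pos ht]
          have h2 : ‖(y + t • u₂) - p₂‖ < c * t := by
            rw [norm_sub_rev]; exact hd2
          exact add_le_add (add_le_add hd1.le le_rfl) h2.le
  have hM : ‖t⁻¹ • (f p₁ - f p₂)‖ ≤ K * ‖u₁ - u₂‖ + 2 * K * c := by
    rw [norm_smul, norm_inv, Real.norm_eq_abs, abs_of_pos ht]
    have hlip := hf p₁ hp1F p₂ hp2F
    have hfp : ‖f p₁ - f p₂‖ ≤ K * (c * t + t * ‖u₁ - u₂‖ + c * t) :=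
      le_trans hlip (by gcongr)
    calc t⁻¹ * ‖f p₁ - f p₂‖ ≤ t⁻¹ * (K * (c * t + t * ‖u₁ - u₂‖ + c * t)) :=
          mul_le_mul_of_nonneg_left hfp (by positivity)
      _ = K * ‖u₁ - u₂‖ + 2 * K * c := by field_simp; ring
  have hdecomp : z₁ - z₂ = -(t⁻¹ • (f p₁ - f y) - z₁) + t⁻¹ • (f p₁ - f p₂)
      + (t⁻¹ • (f p₂ - f y) - z₂) := by
    rw [smul_sub, smul_sub, smul_sub]; abel
  have hnorm : ‖z₁ - z₂‖ ≤ ε/4 + (K * ‖u₁ - u₂‖ + 2 * K * c) + ε/4 := by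
    rw [hdecomp]
    calc ‖-(t⁻¹ • (f p₁ - f y) - z₁) + t⁻¹ • (f p₁ - f p₂)
        + (t⁻¹ • (f p₂ - f y) - z₂)‖
        ≤ ‖-(t⁻¹ • (f p₁ - f y) - z₁) + t⁻¹ • (f p₁ - f p₂)‖
          + ‖t⁻¹ • (f p₂ - f y) - z₂‖ := norm_add_le _ _
      _ ≤ ‖-(t⁻¹ • (f p₁ - f y) - z₁)‖ + ‖t⁻¹ • (f p₁ - f p₂)‖
          + ‖t⁻¹ • (f p₂ - f y) - z₂‖ := by gcongr; exact norm_add_le _ _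
      _ ≤ ε/4 + (K * ‖u₁ - u₂‖ + 2 * K * c) + ε/4 := by
          rw [norm_neg]
          exact add_le_add (add_le_add E₁.le hM) E₂.le
  have hKc : 2 * K * c ≤ ε/2 := by
    calc 2 * K * c ≤ 2 * K * (ε/(4*K)) := by gcongr
      _ = ε/2 := by field_simp; ring
  linarith
end

section
/- Let Y, Z be Banach spaces, p₀ ∈ P ⊂ F ⊂ Y, u ∈ Y, ρ > 0, K > 0. Let f : F → Z and f* : P → Z satisfy f|_P = f* and ‖f(y) − f(p)‖ ≤ K‖y − p‖ whenever p ∈ P, y ∈ F, ‖y − p‖ < ρ and ‖p − p₀‖ < ρ. Assume that both the distance function φ(y) = dist(y, P) and f* are Hadamard differentiable at p₀ in the direction of u. Then f is Hadamard differentiable at p₀ in the direction of u and f'(p₀; u) = (f*)'(p₀; u). -/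
open Filter Metric Set

theorem stmt_10 {Y Z : Type*} [NormedAddCommGroup Y] [NormedSpace ℝ Y] [CompleteSpace Y]
    [NormedAddCommGroup Z] [NormedSpace ℝ Z] [CompleteSpace Z]
    (P F : Set Y) (hPF : P ⊆ F) (p₀ : Y) (hp₀ : p₀ ∈ P) (u : Y)
    (ρ K : ℝ) (hρ : 0 < ρ) (hK : 0 < K)
    (f : Y → Z)
    (hloc : ∀ p ∈ P, ∀ y ∈ F, ‖y - p‖ < ρ → ‖p - p₀‖ < ρ →
      ‖f y - f p‖ ≤ K * ‖y - p‖)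
    (zφ : ℝ)
    (hφ : HadamardDerivED (fun x => Metric.infDist x P) Set.univ p₀ u zφ)
    (z : Z) (hz : HadamardDerivED f P p₀ u z) :
    HadamardDerivED f F p₀ u z := by
  have hinf0 : Metric.infDist p₀ P = 0 := Metric.infDist_zero_of_mem hp₀
  -- Step 1: zφ = 0
  have hz0 : zφ = 0 := by
    by_contra h
    have habs : 0 < |zφ| := abs_pos.mpr h
    obtain ⟨δ, hδ, ω, hω, H⟩ := hφ |zφ| habs
    have hne : (δ/2 : ℝ) ≠ 0 := ne_of_gt (by linarith)
    have habs2 : |(δ/2 : ℝ)| < δ := by rw [abs_of_pos (by linarith)]; linarith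
    have h1 := H (δ/2) hne habs2 u (mem_ball_self hω) (mem_univ _)
    have h2 := H (-(δ/2)) (neg_ne_zero.mpr hne) (by rwa [abs_neg]) u
      (mem_ball_self hω) (mem_univ _)
    simp only [hinf0, sub_zero, smul_eq_mul, Real.norm_eq_abs] at h1 h2
    have ha1 : (0:ℝ) ≤ (δ/2)⁻¹ * Metric.infDist (p₀ + (δ/2) • u) P :=
      mul_nonneg (by positivity) Metric.infDist_nonneg
    have ha2 : (-(δ/2))⁻¹ * Metric.infDist (p₀ + (-(δ/2)) • u) P ≤ 0 := by
      apply mul_nonpos_of_nonpos_of_nonneg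
      · rw [inv_neg]
        have hp : (0:ℝ) < (δ/2)⁻¹ := by positivity
        linarith
      · exact Metric.infDist_nonneg
    rcases Ne.lt_or_gt h with hneg | hpos
    · -- zφ < 0 : use h1
      have : (δ/2)⁻¹ * Metric.infDist (p₀ + (δ/2) • u) P - zφ ≤
          |(δ/2)⁻¹ * Metric.infDist (p₀ + (δ/2) • u) P - zφ| := le_abs_self _
      rw [abs_of_neg hneg] at h1
      linarith
    · -- zφ > 0 : use h2
      have : zφ - (-(δ/2))⁻¹ * Metric.infDist (p₀ + (-(δ/2)) • u) P ≤
          |(-(δ/2))⁻¹ * Metric.infDist (p₀ + (-(δ/2)) • u) P - zφ| := by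
        rw [abs_sub_comm]; exact le_abs_self _
      rw [abs_of_pos hpos] at h2
      linarith
  -- Step 2: main argument
  intro ε hε
  obtain ⟨δ₁, hδ₁, ω₁, hω₁, H1⟩ := hz (ε/3) (by linarith)
  set ε' := min (ε/(6*K+6)) (ω₁/4) with hε'def
  have hε'pos : 0 < ε' := lt_min (by positivity) (by linarith)
  have hε'le1 : ε' ≤ ε/(6*K+6) := min_le_left _ _
  have hε'le2 : ε' ≤ ω₁/4 := min_le_right _ _
  obtain ⟨δ₂, hδ₂, ω₂, hω₂, H2⟩ := hφ ε' hε'pos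
  have hDpos : (0:ℝ) < ‖u‖ + ω₁ + 2*ε' + 1 := by positivity
  refine ⟨min δ₁ (min δ₂ (ρ/(‖u‖+ω₁+2*ε'+1))),
    lt_min hδ₁ (lt_min hδ₂ (by positivity)), min (ω₁/2) ω₂,
    lt_min (by linarith) hω₂, ?_⟩
  intro t ht htlt v hv hyF
  set y := p₀ + t • v with hy
  have htδ₁ : |t| < δ₁ := lt_of_lt_of_le htlt (min_le_left _ _)
  have htδ₂ : |t| < δ₂ :=
    lt_of_lt_of_le htlt ((min_le_right _ _).trans (min_le_left _ _))
  have htρ : |t| < ρ/(‖u‖+ω₁+2*ε'+1) :=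
    lt_of_lt_of_le htlt ((min_le_right _ _).trans (min_le_right _ _))
  have ht0 : (0:ℝ) < |t| := abs_pos.mpr ht
  have hvω₂ : v ∈ Metric.ball u ω₂ :=
    Metric.ball_subset_ball (min_le_right _ _) hv
  have hvω₁ : dist v u < ω₁/2 :=
    lt_of_lt_of_le (Metric.mem_ball.mp hv) (min_le_left _ _)
  -- distance bound
  have hφb := H2 t ht htδ₂ v hvω₂ (mem_univ _)
  simp only [hinf0, hz0, sub_zero, smul_eq_mul, Real.norm_eq_abs] at hφb
  have hinf : Metric.infDist y P < ε' * |t| := by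
    have h1 : |t⁻¹ * Metric.infDist y P| = |t|⁻¹ * Metric.infDist y P := by
      rw [abs_mul, abs_inv, abs_of_nonneg Metric.infDist_nonneg]
    rw [h1] at hφb
    have := (inv_mul_lt_iff₀ ht0).mp hφb
    linarith [this]
  obtain ⟨p, hpP, hpd⟩ := (Metric.infDist_lt_iff ⟨p₀, hp₀⟩).mp
    (lt_of_lt_of_le hinf (by nlinarith : ε' * |t| ≤ 2*ε' * |t|))
  -- hpd : dist y p < 2*ε'*|t|
  have hyp : ‖y - p‖ < 2*ε'*|t| := by rwa [← dist_eq_norm]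
  set w := v + t⁻¹ • (p - y) with hw
  have hpw : p₀ + t • w = p := by
    rw [hw, smul_add, smul_inv_smul₀ ht, hy]
    abel
  have hwv : ‖w - v‖ < 2*ε' := by
    have : w - v = t⁻¹ • (p - y) := by rw [hw]; abel
    rw [this, norm_smul, norm_inv, Real.norm_eq_abs]
    have hpy : ‖p - y‖ < 2*ε'*|t| := by rwa [norm_sub_rev]
    calc |t|⁻¹ * ‖p - y‖ < |t|⁻¹ * (2*ε'*|t|) := by
          exact mul_lt_mul_of_pos_left hpy (by positivity)
      _ = 2*ε' := by field_simp
  have hwu : dist w u < ω₁ := by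
    have : dist w u ≤ ‖w - v‖ + dist v u := by
      rw [dist_eq_norm, dist_eq_norm]
      rw [show w - u = (w - v) + (v - u) from by abel]
      exact norm_add_le _ _
    linarith
  have hzb := H1 t ht htδ₁ w (Metric.mem_ball.mpr hwu) (by rw [hpw]; exact hpP)
  rw [hpw] at hzb
  -- hzb : ‖t⁻¹ • (f p - f p₀) - z‖ < ε/3
  -- Lipschitz estimate
  have hwn : ‖w‖ < ‖u‖ + ω₁ := by
    have : ‖w‖ ≤ ‖u‖ + ‖w - u‖ := by
      have h := norm_add_le u (w - u)
      rwa [show u + (w - u) = w from by abel] at h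
    rw [dist_eq_norm] at hwu
    linarith
  have hpp₀ : ‖p - p₀‖ < ρ := by
    have h1 : p - p₀ = t • w := by rw [← hpw]; abel
    rw [h1, norm_smul, Real.norm_eq_abs]
    have h2 : |t| * ‖w‖ ≤ |t| * (‖u‖ + ω₁) :=
      mul_le_mul_of_nonneg_left (le_of_lt hwn) ht0.le
    have htρ' : |t| * (‖u‖ + ω₁ + 2*ε' + 1) < ρ := (lt_div_iff₀ hDpos).mp htρ
    have h3 : |t| * (‖u‖ + ω₁) ≤ |t| * (‖u‖ + ω₁ + 2*ε' + 1) :=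
      mul_le_mul_of_nonneg_left (by linarith) ht0.le
    linarith
  have hypρ : ‖y - p‖ < ρ := by
    have htρ' : |t| * (‖u‖ + ω₁ + 2*ε' + 1) < ρ := (lt_div_iff₀ hDpos).mp htρ
    have h1 : 2*ε'*|t| ≤ (‖u‖ + ω₁ + 2*ε' + 1) * |t| :=
      mul_le_mul_of_nonneg_right (by linarith [norm_nonneg u]) ht0.le
    rw [mul_comm] at h1
    linarith
  have hlip := hloc p hpP y hyF hypρ hpp₀
  -- final estimate
  have hfirst : ‖t⁻¹ • (f y - f p)‖ < 2*K*ε' := by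
    rw [norm_smul, norm_inv, Real.norm_eq_abs]
    have h1 : |t|⁻¹ * ‖f y - f p‖ ≤ |t|⁻¹ * (K * ‖y - p‖) :=
      mul_le_mul_of_nonneg_left hlip (by positivity)
    have h2 : |t|⁻¹ * (K * ‖y - p‖) < |t|⁻¹ * (K * (2*ε'*|t|)) := by
      apply mul_lt_mul_of_pos_left _ (by positivity)
      exact mul_lt_mul_of_pos_left hyp hK
    have h3 : |t|⁻¹ * (K * (2*ε'*|t|)) = 2*K*ε' := by field_simp
    linarith
  have hsplit : t⁻¹ • (f y - f p₀) - z =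
      t⁻¹ • (f y - f p) + (t⁻¹ • (f p - f p₀) - z) := by
    simp only [smul_sub]; abel
  have hKε' : 2*K*ε' < ε/3 := by
    have h6 : (0:ℝ) < 6*K+6 := by linarith
    have h1 : 2*K*ε' ≤ 2*K*(ε/(6*K+6)) :=
      mul_le_mul_of_nonneg_left hε'le1 (by linarith)
    have h2 : 2*K*(ε/(6*K+6)) < ε/3 := by
      rw [← mul_div_assoc, div_lt_div_iff₀ h6 (by norm_num : (0:ℝ) < 3)]
      nlinarith
    linarith
  calc ‖t⁻¹ • (f y - f p₀) - z‖
      ≤ ‖t⁻¹ • (f y - f p)‖ + ‖t⁻¹ • (f p - f p₀) - z‖ := by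
        rw [hsplit]; exact norm_add_le _ _
    _ < ε := by linarith
end

section
/- Let Y, Z be Banach spaces, p₀ ∈ P ⊂ F ⊂ Y, and f : F → Z a Lipschitz function. If u ∈ Y, the Hadamard derivative (f|_P)'(p₀; u) exists, and P is not porous at p₀ in the directions of u and −u, then f'(p₀; u) exists and f'(p₀; u) = (f|_P)'(p₀; u). -/
open Filter Metric Set

lemma nonporous_aux {Y : Type*} [NormedAddCommGroup Y] [NormedSpace ℝ Y]
    (P : Set Y) (p₀ u : Y) (h : ¬ PorousAt P p₀ u) :
    ∀ c > (0:ℝ), ∃ δ > (0:ℝ), ∀ t : ℝ, 0 < t → t < δ →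
      (Metric.ball (p₀ + t • u) (c * t) ∩ P).Nonempty := by
  intro c hc
  by_contra hcon
  push_neg at hcon
  choose t ht using fun n : ℕ => hcon (1/(n+1)) (by positivity)
  apply h
  refine ⟨c, hc, t, fun n => (ht n).1, ?_, fun n => (ht n).2.2⟩
  exact squeeze_zero (fun n => (ht n).1.le) (fun n => (ht n).2.1.le)
    tendsto_one_div_add_atTop_nhds_zero_nat

theorem stmt_11 {Y Z : Type*} [NormedAddCommGroup Y] [NormedSpace ℝ Y] [CompleteSpace Y]
    [NormedAddCommGroup Z] [NormedSpace ℝ Z] [CompleteSpace Z]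
    (P F : Set Y) (hPF : P ⊆ F) (p₀ : Y) (hp₀ : p₀ ∈ P)
    (f : Y → Z) (K : ℝ)
    (hf : ∀ a ∈ F, ∀ b ∈ F, ‖f a - f b‖ ≤ K * ‖a - b‖)
    (u : Y) (z : Z) (hz : HadamardDerivED f P p₀ u z)
    (hp : ¬ PorousAt P p₀ u) (hpn : ¬ PorousAt P p₀ (-u)) :
    HadamardDerivED f F p₀ u z := by
  intro ε hε
  obtain ⟨δ₁, hδ₁, ω₁, hω₁, H⟩ := hz (ε/2) (by positivity)
  set E : ℝ := ε / (4 * (|K| + 1)) with hEdef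
  have hE : 0 < E := by positivity
  set c : ℝ := min ω₁ E with hcdef
  have hc : 0 < c := lt_min hω₁ hE
  obtain ⟨δa, hδa, Ha⟩ := nonporous_aux P p₀ u hp c hc
  obtain ⟨δb, hδb, Hb⟩ := nonporous_aux P p₀ (-u) hpn c hc
  refine ⟨min δ₁ (min δa δb), by positivity, c, hc, ?_⟩
  intro t ht hlt v hv hvF
  -- find a point p ∈ P near p₀ + t • u
  have hnear : ∃ p ∈ P, ‖p - (p₀ + t • u)‖ < c * |t| := by
    rcases lt_or_gt_of_ne ht with h | h
    · obtain ⟨p, hp1, hp2⟩ := Hb (-t) (by linarith)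
        (by have := lt_of_lt_of_le hlt ((min_le_right _ _).trans (min_le_right _ _))
            rw [abs_of_neg h] at this; exact this)
      refine ⟨p, hp2, ?_⟩
      have : p ∈ Metric.ball (p₀ + t • u) (c * (-t)) := by
        simpa [smul_neg, neg_smul] using hp1
      rw [Metric.mem_ball, dist_eq_norm] at this
      rwa [abs_of_neg h]
    · obtain ⟨p, hp1, hp2⟩ := Ha t h
        (by have := lt_of_lt_of_le hlt ((min_le_right _ _).trans (min_le_left _ _))
            rw [abs_of_pos h] at this; exact this)
      refine ⟨p, hp2, ?_⟩
      rw [Metric.mem_ball, dist_eq_norm] at hp1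
      rwa [abs_of_pos h]
  obtain ⟨p, hpP, hpnear⟩ := hnear
  set w : Y := t⁻¹ • (p - p₀) with hwdef
  have hpw : p₀ + t • w = p := by
    rw [hwdef, smul_inv_smul₀ ht]; abel
  have hwu : ‖w - u‖ < c := by
    have : w - u = t⁻¹ • (p - (p₀ + t • u)) := by
      simp only [hwdef, smul_sub, smul_add, inv_smul_smul₀ ht]
      abel
    rw [this, norm_smul, norm_inv, Real.norm_eq_abs]
    have habs : 0 < |t| := abs_pos.mpr ht
    rw [inv_mul_lt_iff₀ habs]
    calc ‖p - (p₀ + t • u)‖ < c * |t| := hpnear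
      _ = |t| * c := by ring
  -- Hadamard derivative at w
  have H1 : ‖(t⁻¹ • (f (p₀ + t • w) - f p₀)) - z‖ < ε / 2 := by
    apply H t ht (lt_of_lt_of_le hlt (min_le_left _ _)) w
    · rw [Metric.mem_ball, dist_eq_norm]
      exact lt_of_lt_of_le hwu (min_le_left _ _)
    · rw [hpw]; exact hpP
  -- Lipschitz estimate
  have hvw : ‖v - w‖ < 2 * E := by
    have h1 : ‖v - u‖ < c := by
      rw [Metric.mem_ball, dist_eq_norm] at hv; exact hv
    have h2 : c ≤ E := min_le_right _ _
    calc ‖v - w‖ ≤ ‖v - u‖ + ‖u - w‖ := norm_sub_le_norm_sub_add_norm_sub _ _ _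
      _ = ‖v - u‖ + ‖w - u‖ := by rw [norm_sub_rev u w]
      _ < c + c := by linarith
      _ ≤ 2 * E := by linarith
  have hLip : ‖t⁻¹ • (f (p₀ + t • v) - f (p₀ + t • w))‖ < ε / 2 := by
    have habs : 0 < |t| := abs_pos.mpr ht
    have hfb : ‖f (p₀ + t • v) - f (p₀ + t • w)‖ ≤ K * ‖(p₀ + t • v) - (p₀ + t • w)‖ := by
      apply hf _ hvF _ (hPF (hpw ▸ hpP))
    have hdiff : (p₀ + t • v) - (p₀ + t • w) = t • (v - w) := by module
    rw [norm_smul, norm_inv, Real.norm_eq_abs]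
    rw [hdiff, norm_smul, Real.norm_eq_abs] at hfb
    have h3 : ‖f (p₀ + t • v) - f (p₀ + t • w)‖ ≤ |K| * (|t| * ‖v - w‖) := by
      refine hfb.trans ?_
      apply mul_le_mul_of_nonneg_right (le_abs_self K)
      positivity
    have h4 : |t|⁻¹ * ‖f (p₀ + t • v) - f (p₀ + t • w)‖ ≤ |K| * ‖v - w‖ := by
      rw [inv_mul_le_iff₀ habs]
      calc ‖f (p₀ + t • v) - f (p₀ + t • w)‖ ≤ |K| * (|t| * ‖v - w‖) := h3
        _ = |t| * (|K| * ‖v - w‖) := by ring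
    refine h4.trans_lt ?_
    have h5 : |K| * ‖v - w‖ ≤ (|K| + 1) * ‖v - w‖ := by
      apply mul_le_mul_of_nonneg_right (by linarith [abs_nonneg K]) (norm_nonneg _)
    have h6 : (|K| + 1) * ‖v - w‖ < (|K| + 1) * (2 * E) := by
      apply mul_lt_mul_of_pos_left hvw (by positivity)
    have h7 : (|K| + 1) * (2 * E) = ε / 2 := by
      rw [hEdef]; field_simp; ring
    linarith
  -- combine
  have key : (t⁻¹ • (f (p₀ + t • v) - f p₀)) - z
      = t⁻¹ • (f (p₀ + t • v) - f (p₀ + t • w))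
        + ((t⁻¹ • (f (p₀ + t • w) - f p₀)) - z) := by
    module
  rw [key]
  calc ‖_ + _‖ ≤ ‖t⁻¹ • (f (p₀ + t • v) - f (p₀ + t • w))‖
        + ‖(t⁻¹ • (f (p₀ + t • w) - f p₀)) - z‖ := norm_add_le _ _
    _ < ε / 2 + ε / 2 := add_lt_add hLip H1
    _ = ε := by ring
end

section
/- Let X, Y, Z be Banach spaces, G ⊂ X, F ⊂ Y, g : G → Y an arbitrary function and f : F → Z a Lipschitz function. Let x ∈ g⁻¹(F) and e ∈ X. Assume the Hadamard derivatives L = (f ∘ g)'(x; e) and g'(x; e) exist, and g⁻¹(F) is not porous at x in the directions e and −e. Then L is a Hadamard derivative of f at g(x) in the direction of g'(x; e). -/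
open Filter Metric Set

section Aux
variable {X : Type*} [NormedAddCommGroup X] [NormedSpace ℝ X]

lemma nonporous_pointwise {S : Set X} {x d : X} (h : ¬ PorousAt S x d) :
    ∀ c : ℝ, 0 < c → ∃ δ : ℝ, 0 < δ ∧ ∀ t : ℝ, 0 < t → t < δ →
      (Metric.ball (x + t • d) (c * t) ∩ S).Nonempty := by
  intro c hc
  by_contra hcon
  push_neg at hcon
  apply h
  have H : ∀ n : ℕ, ∃ t : ℝ, 0 < t ∧ t < 1/(n+1) ∧
      Metric.ball (x + t • d) (c*t) ∩ S = ∅ := by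
    intro n
    obtain ⟨t, ht, ht2, ht3⟩ := hcon (1/(n+1)) (by positivity)
    exact ⟨t, ht, ht2, ht3⟩
  choose t ht1 ht2 ht3 using H
  refine ⟨c, hc, t, ht1, ?_, ht3⟩
  refine squeeze_zero (fun n => (ht1 n).le) (fun n => (ht2 n).le) ?_
  exact tendsto_one_div_add_atTop_nhds_zero_nat

lemma keyB {S : Set X} {x e : X} (hp : ¬ PorousAt S x e) (hpn : ¬ PorousAt S x (-e)) :
    ∀ ε : ℝ, 0 < ε → ∃ δ : ℝ, 0 < δ ∧ ∀ s : ℝ, s ≠ 0 → |s| < δ →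
      ∃ u : X, x + s • u ∈ S ∧ ‖u - e‖ < ε := by
  intro ε hε
  obtain ⟨δ1, hδ1, h1⟩ := nonporous_pointwise hp ε hε
  obtain ⟨δ2, hδ2, h2⟩ := nonporous_pointwise hpn ε hε
  refine ⟨min δ1 δ2, lt_min hδ1 hδ2, fun s hs hslt => ?_⟩
  have hkey : ∃ p, p ∈ S ∧ ‖p - (x + s • e)‖ < ε * |s| := by
    rcases hs.lt_or_gt with hneg | hpos
    · have habs : |s| = -s := abs_of_neg hneg
      obtain ⟨p, hpball, hpS⟩ := h2 (-s) (by linarith)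
        (by rw [← habs]; exact lt_of_lt_of_le hslt (min_le_right _ _))
      refine ⟨p, hpS, ?_⟩
      have heq : x + (-s) • (-e) = x + s • e := by
        rw [neg_smul, smul_neg, neg_neg]
      rw [mem_ball, dist_eq_norm, heq] at hpball
      calc ‖p - (x + s • e)‖ < ε * (-s) := hpball
        _ = ε * |s| := by rw [habs]
    · have habs : |s| = s := abs_of_pos hpos
      obtain ⟨p, hpball, hpS⟩ := h1 s hpos
        (by rw [← habs]; exact lt_of_lt_of_le hslt (min_le_left _ _))
      refine ⟨p, hpS, ?_⟩
      rw [mem_ball, dist_eq_norm] at hpball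
      rw [habs]; exact hpball
  obtain ⟨p, hpS, hp2⟩ := hkey
  refine ⟨s⁻¹ • (p - x), ?_, ?_⟩
  · rw [smul_inv_smul₀ hs]; simpa using hpS
  · have heq : s⁻¹ • (p - x) - e = s⁻¹ • (p - (x + s • e)) := by
      rw [sub_add_eq_sub_sub, smul_sub, smul_sub, inv_smul_smul₀ hs, smul_sub]
    rw [heq, norm_smul, Real.norm_eq_abs, abs_inv]
    have habs : (0:ℝ) < |s| := abs_pos.mpr hs
    calc |s|⁻¹ * ‖p - (x + s • e)‖ < |s|⁻¹ * (ε * |s|) := by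
          exact (mul_lt_mul_iff_right₀ (by positivity)).mpr hp2
      _ = ε := by field_simp
lemma keyC {S : Set X} {x e : X} (hxS : x ∈ S)
    (hB : ∀ ε : ℝ, 0 < ε → ∃ δ : ℝ, 0 < δ ∧ ∀ s : ℝ, s ≠ 0 → |s| < δ →
      ∃ u : X, x + s • u ∈ S ∧ ‖u - e‖ < ε)
    (s : ℕ → ℝ) (hs0 : ∀ n, s n ≠ 0) (hst : Tendsto s atTop (nhds 0)) :
    ∃ u : ℕ → X, (∀ n, x + s n • u n ∈ S) ∧ Tendsto u atTop (nhds e) := by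
  classical
  have hB' : ∀ k : ℕ, ∃ δ : ℝ, 0 < δ ∧ ∀ r : ℝ, r ≠ 0 → |r| < δ →
      ∃ u : X, x + r • u ∈ S ∧ ‖u - e‖ < 1/(k+1) :=
    fun k => hB (1/(k+1)) (by positivity)
  choose δ hδpos hδ using hB'
  set P : ℕ → ℕ → Prop := fun n k => ∀ j ≤ k, |s n| < δ j with hPdef
  set Kn : ℕ → ℕ := fun n => Nat.findGreatest (P n) n with hKdef
  have hPK : ∀ n, |s n| < δ 0 → ∃ u : X, x + s n • u ∈ S ∧
      ‖u - e‖ < 1/((Kn n : ℝ)+1) := by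
    intro n h
    have hP0 : P n 0 := by
      intro j hj
      have : j = 0 := Nat.le_zero.mp hj
      rw [this]; exact h
    have hPKn : P n (Kn n) := Nat.findGreatest_spec (Nat.zero_le n) hP0
    exact hδ (Kn n) (s n) (hs0 n) (hPKn _ le_rfl)
  set u : ℕ → X := fun n => if h : |s n| < δ 0 then (hPK n h).choose else 0 with hudef
  refine ⟨u, ?_, ?_⟩
  · intro n
    by_cases h : |s n| < δ 0
    · rw [hudef]; simp only [dif_pos h]
      exact (hPK n h).choose_spec.1
    · rw [hudef]; simp only [dif_neg h, smul_zero, add_zero]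
      exact hxS
  · rw [Metric.tendsto_atTop]
    intro ε hε
    obtain ⟨k, hk⟩ := exists_nat_one_div_lt hε
    have hcpos : ∀ k : ℕ, ∃ c : ℝ, 0 < c ∧ ∀ j ≤ k, c ≤ δ j := by
      intro k
      induction k with
        | zero => exact ⟨δ 0, hδpos 0, fun j hj => by rw [Nat.le_zero.mp hj]⟩
        | succ m ih =>
          obtain ⟨c, hc, hcle⟩ := ih
          refine ⟨min c (δ (m+1)), lt_min hc (hδpos _), fun j hj => ?_⟩
          rcases Nat.lt_succ_iff_lt_or_eq.mp (Nat.lt_succ_of_le hj) with h' | h'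
          · exact le_trans (min_le_left _ _) (hcle j (Nat.lt_succ_iff.mp h'))
          · rw [h']; exact min_le_right _ _
    obtain ⟨c, hc, hcle⟩ := hcpos k
    have hev : ∀ᶠ n in atTop, |s n| < c := by
      have := hst.eventually (eventually_abs_sub_lt 0 hc)
      simpa using this
    rw [eventually_atTop] at hev
    obtain ⟨N1, hN1⟩ := hev
    refine ⟨max N1 k, fun n hn => ?_⟩
    have hsn : |s n| < c := hN1 n (le_trans (le_max_left _ _) hn)
    have hPnk : P n k := fun j hj => lt_of_lt_of_le hsn (hcle j hj)
    have hkn : k ≤ Kn n :=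
      Nat.le_findGreatest (le_trans (le_max_right _ _) hn) hPnk
    have h0 : |s n| < δ 0 := hPnk 0 (Nat.zero_le k)
    rw [hudef, dist_eq_norm]
    simp only [dif_pos h0]
    have := (hPK n h0).choose_spec.2
    calc ‖(hPK n h0).choose - e‖ < 1/((Kn n : ℝ)+1) := this
      _ ≤ 1/((k : ℝ)+1) := by
          apply one_div_le_one_div_of_le (by positivity)
          have : (k : ℝ) ≤ (Kn n : ℝ) := Nat.cast_le.mpr hkn
          linarith
      _ < ε := hk

end Aux

theorem stmt_12 {X Y Z : Type*}
    [NormedAddCommGroup X] [NormedSpace ℝ X] [CompleteSpace X]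
    [NormedAddCommGroup Y] [NormedSpace ℝ Y] [CompleteSpace Y]
    [NormedAddCommGroup Z] [NormedSpace ℝ Z] [CompleteSpace Z]
    (G : Set X) (F : Set Y) (g : X → Y) (f : Y → Z)
    (K : ℝ) (hf : ∀ a ∈ F, ∀ b ∈ F, ‖f a - f b‖ ≤ K * ‖a - b‖)
    (x : X) (hx : x ∈ G) (hgx : g x ∈ F) (e : X) (L : Z) (v : Y)
    (hL : HadamardDerivAt (fun p => f (g p)) (G ∩ g ⁻¹' F) x e L)
    (hv : HadamardDerivAt g G x e v)
    (hp : ¬ PorousAt (G ∩ g ⁻¹' F) x e)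
    (hpn : ¬ PorousAt (G ∩ g ⁻¹' F) x (-e)) :
    HadamardDerivAt f F (g x) v L := by
  intro s w hs0 hst hwt hmem
  have hxS : x ∈ G ∩ g ⁻¹' F := ⟨hx, hgx⟩
  obtain ⟨u, huS, hue⟩ := keyC hxS (keyB hp hpn) s hs0 hst
  have h1 := hL s u hs0 hst hue huS
  have h2 := hv s u hs0 hst hue (fun n => (huS n).1)
  simp only [] at h1
  have key : ∀ n, ((s n)⁻¹ • (f (g x + s n • w n) - f (g (x + s n • u n)))) +
      ((s n)⁻¹ • (f (g (x + s n • u n)) - f (g x))) =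
      (s n)⁻¹ • (f (g x + s n • w n) - f (g x)) := by
    intro n; rw [← smul_add, sub_add_sub_cancel]
  have ha : Tendsto (fun n => (s n)⁻¹ •
      (f (g x + s n • w n) - f (g (x + s n • u n)))) atTop (nhds 0) := by
    apply squeeze_zero_norm
      (a := fun n => K * ‖w n - (s n)⁻¹ • (g (x + s n • u n) - g x)‖)
    · intro n
      have hA : g x + s n • w n ∈ F := hmem n
      have hB : g (x + s n • u n) ∈ F := (huS n).2
      have hlip := hf _ hA _ hB
      rw [norm_smul, Real.norm_eq_abs, abs_inv]
      have habs : (0:ℝ) < |s n| := abs_pos.mpr (hs0 n)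
      have heq : (g x + s n • w n) - g (x + s n • u n) =
          s n • (w n - (s n)⁻¹ • (g (x + s n • u n) - g x)) := by
        rw [smul_sub, smul_inv_smul₀ (hs0 n)]; abel
      calc |s n|⁻¹ * ‖f (g x + s n • w n) - f (g (x + s n • u n))‖
          ≤ |s n|⁻¹ * (K * ‖(g x + s n • w n) - g (x + s n • u n)‖) :=
            mul_le_mul_of_nonneg_left hlip (by positivity)
        _ = K * ‖w n - (s n)⁻¹ • (g (x + s n • u n) - g x)‖ := by
            rw [heq, norm_smul, Real.norm_eq_abs]
            field_simp
    · have hd : Tendsto (fun n => w n - (s n)⁻¹ • (g (x + s n • u n) - g x))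
          atTop (nhds 0) := by
        have := hwt.sub h2
        simpa using this
      have := hd.norm
      rw [norm_zero] at this
      have := this.const_mul K
      rw [mul_zero] at this
      exact this
  have hsum := ha.add h1
  rw [zero_add] at hsum
  exact hsum.congr key
end

section
/- Let X, Y be Banach spaces, G ⊂ X, F ⊂ Y, g : G → Y a function, and define g̃ : G × Y → Y by g̃(x, y) = g(x) + y. Suppose x ∈ G, g(x) ∈ F, v ∈ X, the Hadamard derivative v̄ = g'(x; v) exists, w ∈ Y, F is not porous at g(x) in the direction v̄ + w, and G is not porous at x in the direction v. Then H = g̃⁻¹(F) ⊂ X × Y is not porous at (x, 0) in the direction (v, w). -/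
open Filter Metric Set

theorem stmt_14 {X Y : Type*}
    [NormedAddCommGroup X] [NormedSpace ℝ X] [CompleteSpace X]
    [NormedAddCommGroup Y] [NormedSpace ℝ Y] [CompleteSpace Y]
    (G : Set X) (F : Set Y) (g : X → Y)
    (x : X) (hx : x ∈ G) (hgx : g x ∈ F) (v : X) (vbar : Y) (w : Y)
    (hder : HadamardDerivED g G x v vbar)
    (hF : ¬ PorousAt F (g x) (vbar + w))
    (hG : ¬ PorousAt G x v) :
    ¬ PorousAt {p : X × Y | p.1 ∈ G ∧ g p.1 + p.2 ∈ F} (x, 0) (v, w) := by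
  rintro ⟨c, hc, t, ht0, htlim, hball⟩
  obtain ⟨δ, hδ, ω, hω, hH⟩ := hder (c / 2) (by positivity)
  have hc'0 : 0 < min c ω := lt_min hc hω
  -- For infinitely many n, the exclusion ball around `x + t n • v` meets `G`.
  have hfreq : ∃ᶠ n in atTop,
      (Metric.ball (x + t n • v) (min c ω * t n) ∩ G).Nonempty := by
    by_contra h
    rw [Filter.not_frequently] at h
    obtain ⟨N, hN⟩ := Filter.eventually_atTop.mp h
    exact hG ⟨min c ω, hc'0, fun n => t (n + N), fun n => ht0 _,
      htlim.comp (Filter.tendsto_add_atTop_nat N),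
      fun n => Set.not_nonempty_iff_eq_empty.mp (hN (n + N) (Nat.le_add_left _ _))⟩
  have hδsmall : ∀ᶠ n in atTop, t n < δ := htlim.eventually (gt_mem_nhds hδ)
  obtain ⟨φ, hφ, hP⟩ :=
    Filter.extraction_of_frequently_atTop (hfreq.and_eventually hδsmall)
  apply hF
  refine ⟨c / 2, by positivity, t ∘ φ, fun n => ht0 _,
    htlim.comp hφ.tendsto_atTop, fun n => ?_⟩
  obtain ⟨⟨a, haball, haG⟩, hsδ⟩ := hP n
  set s := t (φ n) with hs_def
  have hs : 0 < s := ht0 _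
  rw [Set.eq_empty_iff_forall_notMem]
  rintro z ⟨hz, hzF⟩
  have hadist : ‖a - (x + s • v)‖ < min c ω * s := by
    have := mem_ball_iff_norm.mp haball
    exact this
  -- rewrite a as x + s • u
  set u : X := s⁻¹ • (a - x) with hu_def
  have hxu : x + s • u = a := by
    rw [hu_def, smul_inv_smul₀ hs.ne']
    abel
  have huv : u - v = s⁻¹ • (a - (x + s • v)) := by
    rw [hu_def, smul_sub, smul_sub, smul_add, smul_smul,
      inv_mul_cancel₀ hs.ne', one_smul]
    abel
  have hu_ball : u ∈ Metric.ball v ω := by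
    rw [mem_ball_iff_norm, huv, norm_smul, Real.norm_eq_abs,
      abs_of_pos (inv_pos.mpr hs)]
    calc s⁻¹ * ‖a - (x + s • v)‖ < s⁻¹ * (min c ω * s) := by
          exact mul_lt_mul_of_pos_left hadist (inv_pos.mpr hs)
      _ = min c ω := by field_simp
      _ ≤ ω := min_le_right _ _
  have hd : ‖s⁻¹ • (g a - g x) - vbar‖ < c / 2 := by
    have := hH s hs.ne' (by rwa [abs_of_pos hs]) u hu_ball (by rwa [hxu])
    rwa [hxu] at this
  have hkey : ‖g a - g x - s • vbar‖ < c / 2 * s := by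
    have heq : g a - g x - s • vbar = s • (s⁻¹ • (g a - g x) - vbar) := by
      rw [smul_sub, smul_inv_smul₀ hs.ne']
    rw [heq, norm_smul, Real.norm_eq_abs, abs_of_pos hs, mul_comm]
    exact mul_lt_mul_of_pos_right hd hs
  -- the point (a, z - g a) lies in the forbidden product ball and in H
  have hmem : (a, z - g a) ∈
      Metric.ball ((x, (0 : Y)) + s • (v, w)) (c * s) := by
    have h1 : a ∈ Metric.ball (x + s • v) (c * s) := by
      rw [mem_ball_iff_norm]
      exact lt_of_lt_of_le hadist
        (mul_le_mul_of_nonneg_right (min_le_left _ _) hs.le)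
    have hz' : ‖z - (g x + s • (vbar + w))‖ < c / 2 * s :=
      mem_ball_iff_norm.mp hz
    have h2 : z - g a ∈ Metric.ball ((0 : Y) + s • w) (c * s) := by
      rw [mem_ball_iff_norm]
      have heq : z - g a - ((0 : Y) + s • w) =
          (z - (g x + s • (vbar + w))) - (g a - g x - s • vbar) := by
        rw [smul_add]; abel
      rw [heq]
      calc ‖(z - (g x + s • (vbar + w))) - (g a - g x - s • vbar)‖
          ≤ ‖z - (g x + s • (vbar + w))‖ + ‖g a - g x - s • vbar‖ :=
            norm_sub_le _ _
        _ < c / 2 * s + c / 2 * s := add_lt_add hz' hkey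
        _ = c * s := by ring
    have : ((x, (0 : Y)) + s • (v, w)) = (x + s • v, (0 : Y) + s • w) := rfl
    rw [this, ← ball_prod_same]
    exact Set.mk_mem_prod h1 h2
  have hmemH : (a, z - g a) ∈ {p : X × Y | p.1 ∈ G ∧ g p.1 + p.2 ∈ F} := by
    refine ⟨haG, ?_⟩
    simpa using hzF
  have := hball (φ n)
  rw [Set.eq_empty_iff_forall_notMem] at this
  exact this _ ⟨hmem, hmemH⟩
end

section
/- Let Y, Z be Banach spaces, F ⊂ Y and f : F → Z a K-Lipschitz function, K > 0, and let u, v ∈ Y with r = ‖v − u‖. If F is not porous at y ∈ F in the direction of v, then for every η > 0 there is δ₀ > 0 such that for every δ ∈ (0, δ₀) and ω > 0, the one-sided Hadamard derived set satisfies D⁺[δ, ω] f(y, u) ⊂ D⁺[δ, η] f(y, v) + B(0, (r + ω + η)K). -/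
open Filter Metric Set Pointwise

/-- One-sided Hadamard derived set
`D⁺[δ,ω] f(y,v) = {(f(y+tû) − f(y))/t : t ∈ (0,δ), û ∈ B(v,ω), y+tû ∈ F}`. -/
def DSetPlus {Y Z : Type*} [NormedAddCommGroup Y] [NormedSpace ℝ Y]
    [NormedAddCommGroup Z] [NormedSpace ℝ Z]
    (f : Y → Z) (F : Set Y) (y v : Y) (δ ω : ℝ) : Set Z :=
  {z | ∃ t : ℝ, 0 < t ∧ t < δ ∧
    ∃ u ∈ Metric.closedBall v ω, y + t • u ∈ F ∧ z = t⁻¹ • (f (y + t • u) - f y)}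

lemma key {Y : Type*} [NormedAddCommGroup Y] [NormedSpace ℝ Y]
    (F : Set Y) (y v : Y) (hnp : ¬ PorousAt F y v) (c : ℝ) (hc : 0 < c) :
    ∃ δ₀ > (0:ℝ), ∀ t : ℝ, 0 < t → t < δ₀ →
      (Metric.ball (y + t • v) (c * t) ∩ F).Nonempty := by
  by_contra h
  push_neg at h
  have h' : ∀ n : ℕ, ∃ t : ℝ, 0 < t ∧ t < 1/(n+1) ∧
      Metric.ball (y + t • v) (c * t) ∩ F = ∅ := by
    intro n
    obtain ⟨t, ht, ht', hball⟩ := h (1/(n+1)) (by positivity)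
    exact ⟨t, ht, ht', hball⟩
  choose t ht htlt hball using h'
  apply hnp
  refine ⟨c, hc, t, ht, ?_, hball⟩
  have : Tendsto (fun n : ℕ => 1/(n+1) : ℕ → ℝ) atTop (nhds 0) :=
    tendsto_one_div_add_atTop_nhds_zero_nat
  exact squeeze_zero (fun n => (ht n).le) (fun n => (htlt n).le) this

theorem stmt_15 {Y Z : Type*} [NormedAddCommGroup Y] [NormedSpace ℝ Y] [CompleteSpace Y]
    [NormedAddCommGroup Z] [NormedSpace ℝ Z] [CompleteSpace Z]
    (F : Set Y) (f : Y → Z) (K : ℝ) (hK : 0 < K)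
    (hf : ∀ a ∈ F, ∀ b ∈ F, ‖f a - f b‖ ≤ K * ‖a - b‖)
    (u v : Y) (y : Y) (hy : y ∈ F) (hnp : ¬ PorousAt F y v) :
    ∀ η > (0 : ℝ), ∃ δ₀ > (0 : ℝ), ∀ δ : ℝ, 0 < δ → δ < δ₀ → ∀ ω > (0 : ℝ),
      DSetPlus f F y u δ ω ⊆
        DSetPlus f F y v δ η + Metric.closedBall (0 : Z) ((‖v - u‖ + ω + η) * K) := by
  intro η hη
  obtain ⟨δ₀, hδ₀, hkey⟩ := key F y v hnp η hη
  refine ⟨δ₀, hδ₀, ?_⟩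
  intro δ hδ hδδ₀ ω hω z hz
  obtain ⟨t, ht, htδ, uh, huh, huhF, rfl⟩ := hz
  obtain ⟨p, hpball, hpF⟩ := hkey t ht (htδ.trans hδδ₀)
  set w : Y := t⁻¹ • (p - y) with hw
  have ht' : t ≠ 0 := ht.ne'
  have hp : y + t • w = p := by
    rw [hw, smul_smul, mul_inv_cancel₀ ht', one_smul]; abel
  have hwv : ‖w - v‖ ≤ η := by
    have h1 : w - v = t⁻¹ • (p - (y + t • v)) := by
      rw [hw]; match_scalars <;> field_simp
    have h2 : ‖p - (y + t • v)‖ < η * t := by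
      simpa [dist_eq_norm] using hpball
    rw [h1, norm_smul, norm_inv, Real.norm_of_nonneg ht.le]
    calc t⁻¹ * ‖p - (y + t • v)‖ ≤ t⁻¹ * (η * t) := by
          exact mul_le_mul_of_nonneg_left h2.le (inv_nonneg.mpr ht.le)
      _ = η := by field_simp
  refine ⟨t⁻¹ • (f (y + t • w) - f y), ⟨t, ht, htδ, w, by simpa [mem_closedBall, dist_eq_norm] using hwv, by rwa [hp], rfl⟩,
    t⁻¹ • (f (y + t • uh) - f (y + t • w)), ?_, by show t⁻¹ • (f (y + t • w) - f y) + t⁻¹ • (f (y + t • uh) - f (y + t • w)) = _; rw [← smul_add]; congr 1; abel⟩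
  rw [mem_closedBall, dist_zero_right, norm_smul, norm_inv, Real.norm_of_nonneg ht.le]
  have hb : ‖f (y + t • uh) - f (y + t • w)‖ ≤ K * ‖(y + t • uh) - (y + t • w)‖ :=
    hf _ huhF _ (by rwa [hp])
  have hdiff : (y + t • uh) - (y + t • w) = t • (uh - w) := by
    rw [smul_sub]; abel
  have hnorm : ‖uh - w‖ ≤ ‖v - u‖ + ω + η := by
    calc ‖uh - w‖ = ‖(uh - u) + (u - v) + (v - w)‖ := by abel_nf
      _ ≤ ‖(uh - u) + (u - v)‖ + ‖v - w‖ := norm_add_le _ _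
      _ ≤ ‖uh - u‖ + ‖u - v‖ + ‖v - w‖ := by gcongr; exact norm_add_le _ _
      _ ≤ ω + ‖v - u‖ + η := by
          gcongr
          · simpa [mem_closedBall, dist_eq_norm] using huh
          · rw [norm_sub_rev]
          · rwa [norm_sub_rev]
      _ = ‖v - u‖ + ω + η := by ring
  calc t⁻¹ * ‖f (y + t • uh) - f (y + t • w)‖
      ≤ t⁻¹ * (K * (t * ‖uh - w‖)) := by
        rw [hdiff, norm_smul, Real.norm_of_nonneg ht.le] at hb
        exact mul_le_mul_of_nonneg_left hb (inv_nonneg.mpr ht.le)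
    _ = K * ‖uh - w‖ := by field_simp
    _ ≤ (‖v - u‖ + ω + η) * K := by rw [mul_comm (‖v - u‖ + ω + η) K]; exact mul_le_mul_of_nonneg_left hnorm hK.le
end

section
/- Let Y, Z be Banach spaces, F ⊂ Y, f : F → Z and f̃ : Y → Z both K-Lipschitz with K > 0 and f̃ extending f. Let y ∈ F, u ∈ Y. If F is not porous at y in the direction of u, then for every ε > 0 there is δ₀ > 0 such that for every δ ∈ (0, δ₀): D⁺[δ, ε] f̃(y, u) ⊂ D⁺[δ, ε] f(y, u) + B(0, 2εK). -/
open Filter Metric Set Pointwise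

lemma not_porous_aux {Y : Type*} [NormedAddCommGroup Y] [NormedSpace ℝ Y]
    {F : Set Y} {y u : Y} (hnp : ¬ PorousAt F y u) :
    ∀ c > (0:ℝ), ∃ δ₀ > (0:ℝ), ∀ t : ℝ, 0 < t → t < δ₀ →
      (Metric.ball (y + t • u) (c * t) ∩ F).Nonempty := by
  intro c hc
  by_contra h
  push_neg at h
  apply hnp
  refine ⟨c, hc, ?_⟩
  have H : ∀ n : ℕ, ∃ t : ℝ, 0 < t ∧ t < 1/(n+1) ∧
      Metric.ball (y + t • u) (c * t) ∩ F = ∅ := by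
    intro n
    obtain ⟨t, ht, htn, hempty⟩ := h (1/(n+1)) (by positivity)
    exact ⟨t, ht, htn, hempty⟩
  choose t ht htlt hemp using H
  refine ⟨t, ht, ?_, hemp⟩
  apply squeeze_zero (fun n => (ht n).le) (fun n => (htlt n).le)
  exact tendsto_one_div_add_atTop_nhds_zero_nat

theorem stmt_17 {Y Z : Type*} [NormedAddCommGroup Y] [NormedSpace ℝ Y] [CompleteSpace Y]
    [NormedAddCommGroup Z] [NormedSpace ℝ Z] [CompleteSpace Z]
    (F : Set Y) (f ftilde : Y → Z) (K : ℝ) (hK : 0 < K)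
    (hf : ∀ a ∈ F, ∀ b ∈ F, ‖f a - f b‖ ≤ K * ‖a - b‖)
    (hft : ∀ a b : Y, ‖ftilde a - ftilde b‖ ≤ K * ‖a - b‖)
    (hext : ∀ x ∈ F, ftilde x = f x)
    (y : Y) (hy : y ∈ F) (u : Y) (hnp : ¬ PorousAt F y u) :
    ∀ ε > (0 : ℝ), ∃ δ₀ > (0 : ℝ), ∀ δ : ℝ, 0 < δ → δ < δ₀ →
      DSetPlus ftilde Set.univ y u δ ε ⊆
        DSetPlus f F y u δ ε + Metric.closedBall (0 : Z) (2 * ε * K) := by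
  intro ε hε
  obtain ⟨δ₀, hδ₀, hδ⟩ := not_porous_aux hnp ε hε
  refine ⟨δ₀, hδ₀, ?_⟩
  intro δ hδpos hδlt z hz
  obtain ⟨t, ht, htδ, uh, huh, -, rfl⟩ := hz
  obtain ⟨p, hpball, hpF⟩ := hδ t ht (htδ.trans hδlt)
  have htne : (t : ℝ) ≠ 0 := ht.ne'
  set u' : Y := t⁻¹ • (p - y) with hu'
  have hpu' : y + t • u' = p := by
    rw [hu', smul_smul, mul_inv_cancel₀ htne, one_smul]
    abel
  have hdist : ‖p - (y + t • u)‖ < ε * t := mem_ball_iff_norm.mp hpball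
  have hu'mem : u' ∈ Metric.closedBall u ε := by
    rw [Metric.mem_closedBall, dist_eq_norm, hu']
    have : t⁻¹ • (p - (y + t • u)) = t⁻¹ • (p - y) - u := by
      rw [show p - (y + t • u) = (p - y) - t • u by abel, smul_sub, smul_smul,
        inv_mul_cancel₀ htne, one_smul]
    rw [← this, norm_smul, norm_inv, Real.norm_of_nonneg ht.le]
    calc t⁻¹ * ‖p - (y + t • u)‖ ≤ t⁻¹ * (ε * t) := by
          exact mul_le_mul_of_nonneg_left hdist.le (by positivity)
      _ = ε := by field_simp
  refine Set.mem_add.mpr ⟨t⁻¹ • (f p - f y),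
    ⟨t, ht, htδ, u', hu'mem, by rw [hpu']; exact hpF, by rw [hpu']⟩,
    t⁻¹ • (ftilde (y + t • uh) - ftilde y) - t⁻¹ • (f p - f y), ?_, by abel⟩
  rw [Metric.mem_closedBall, dist_zero_right]
  have heq : t⁻¹ • (ftilde (y + t • uh) - ftilde y) - t⁻¹ • (f p - f y)
      = t⁻¹ • (ftilde (y + t • uh) - ftilde p) := by
    rw [hext p hpF, hext y hy, ← smul_sub]
    congr 1
    abel
  rw [heq, norm_smul, norm_inv, Real.norm_of_nonneg ht.le]
  have h1 : ‖(y + t • uh) - p‖ ≤ t * ε + ε * t := by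
    calc ‖(y + t • uh) - p‖ = ‖t • (uh - u) + ((y + t • u) - p)‖ := by
          congr 1; rw [smul_sub]; abel
      _ ≤ ‖t • (uh - u)‖ + ‖(y + t • u) - p‖ := norm_add_le _ _
      _ ≤ t * ε + ε * t := by
          gcongr
          · rw [norm_smul, Real.norm_of_nonneg ht.le]
            exact mul_le_mul_of_nonneg_left
              (by rw [← dist_eq_norm]; exact Metric.mem_closedBall.mp huh) ht.le
          · rw [norm_sub_rev]; exact hdist.le
  calc t⁻¹ * ‖ftilde (y + t • uh) - ftilde p‖
      ≤ t⁻¹ * (K * ‖(y + t • uh) - p‖) := by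
        exact mul_le_mul_of_nonneg_left (hft _ _) (by positivity)
    _ ≤ t⁻¹ * (K * (t * ε + ε * t)) := by gcongr
    _ = 2 * ε * K := by field_simp; ring
end
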